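/- For every ε > 0, the sequence of Hamming cubes (H_m)_{m ∈ ℕ} embeds into the sequence of lamplighter graphs (Lam(W_{2,n}))_{n ∈ ℕ} with distortion at most 1 + ε: for each m there exists n and a map f : H_m → Lam(W_{2,n}) with distortion ≤ 1 + ε. -/

import Mathlib

open scoped symmDiff

/-- Condition for a pair `(l, r)` to encode a vertex of the subdivided tree `W_{θ,n}`:
`l` is the binary address (of length `k ≤ n`) of the nearest node at or below the vertex,
and `r` is the distance from the parent node of `l` along the subdivided edge into `l`
(`r = θ^(n-k)` is the node `l` itself); the root is `([], 0)`. -/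
def WCond (θ n : ℕ) (p : List Bool × ℕ) : Prop :=
  p.1.length ≤ n ∧ p.2 ≤ θ ^ n ∧ (p.1 = [] → p.2 = 0) ∧
    (p.1 ≠ [] → 1 ≤ p.2 ∧ p.2 ≤ θ ^ (n - p.1.length))

instance (θ n : ℕ) : DecidablePred (WCond θ n) := fun p => by unfold WCond; infer_instance

/-- Vertices of the tree `W_{θ,n}`. -/
def Wvertex (θ n : ℕ) : Type := { p : List Bool × ℕ // WCond θ n p }

instance (θ n : ℕ) : DecidableEq (Wvertex θ n) := Subtype.instDecidableEq

/-- Weighted depth of a node `l` of the binary tree `B_n` in `W_{θ,n}`: the sum of the lengths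
`θ^(n-i)` of the subdivided edges on the way from the root to `l`. -/
def wdepth (θ n : ℕ) (l : List Bool) : ℕ := ∑ i ∈ Finset.range l.length, θ ^ (n - (i + 1))

/-- Distance of a vertex of `W_{θ,n}` from the root. -/
def wheight (θ n : ℕ) (v : Wvertex θ n) : ℕ := wdepth θ n v.1.1.dropLast + v.1.2

/-- Longest common prefix of two lists. -/
def commonPrefix : List Bool → List Bool → List Bool
  | a :: as, b :: bs => if a = b then a :: commonPrefix as bs else []
  | _, _ => []

/-- The shortest path metric of the tree `W_{θ,n}`. -/
def Wdist (θ n : ℕ) (x y : Wvertex θ n) : ℕ :=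
  if x.1.1.isPrefixOf y.1.1 ∨ y.1.1.isPrefixOf x.1.1 then
    max (wheight θ n x) (wheight θ n y) - min (wheight θ n x) (wheight θ n y)
  else wheight θ n x + wheight θ n y - 2 * wdepth θ n (commonPrefix x.1.1 y.1.1)

/-- The root of `W_{θ,n}`. -/
def Wroot (θ n : ℕ) : Wvertex θ n := ⟨([], 0), by simp [WCond]⟩

/-- The tree `W_{θ,n}` as a simple graph: edges are pairs of vertices at distance 1. -/
def WGraph (θ n : ℕ) : SimpleGraph (Wvertex θ n) where
  Adj x y := x ≠ y ∧ Wdist θ n x y = 1 ∧ Wdist θ n y x = 1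
  symm := ⟨fun _ _ ⟨h1, h2, h3⟩ => ⟨h1.symm, h3, h2⟩⟩
  loopless := ⟨fun _ h => h.1 rfl⟩

/-- The lamplighter graph over a graph `G`: vertices are pairs (set of lamps on, position of
the lamplighter), and moves either shift the lamplighter along an edge of `G` or toggle the
lamp at the current position. -/
def Lam {V : Type*} [DecidableEq V] (G : SimpleGraph V) : SimpleGraph (Finset V × V) where
  Adj p q := (p.1 = q.1 ∧ G.Adj p.2 q.2) ∨ (p.2 = q.2 ∧ p.1 ∆ q.1 = {p.2})
  symm := by
    constructor
    rintro ⟨A, x⟩ ⟨B, y⟩ (⟨h1, h2⟩ | ⟨h1, h2⟩)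
    · exact Or.inl ⟨h1.symm, h2.symm⟩
    · exact Or.inr ⟨h1.symm, by rw [symmDiff_comm, h2, h1]⟩
  loopless := by
    constructor
    rintro ⟨A, x⟩ (⟨_, h⟩ | ⟨_, h⟩)
    · exact G.loopless.irrefl x h
    · rw [symmDiff_self] at h
      exact Finset.singleton_ne_empty x h.symm

/-- The Hamming (`ℓ₁`) distance on the Hamming cube `H_m = {0,1}^m`. -/
def hamCubeDist {m : ℕ} (x y : Fin m → Bool) : ℕ :=
  (Finset.univ.filter fun i => x i ≠ y i).card

/-
Send `x ∈ H_m` to the configuration of `Lam(W_{2,n})` with the lamplighter at the root and the lamps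
lit exactly on the subtrees below the nodes `a_i` with `x_i = 1`, where `a_1, …, a_m` are distinct
nodes of depth `m`. The images of `x` and `y` differ on the union `S` of `d(x, y)` such subtrees,
each with `t = (n - m + 1) 2^(n - m)` vertices. Any route from one image to the other toggles every
lamp of `S` and crosses the edge entering each vertex of `S` twice, so it has length at least
`3 |S| = 3 t d(x, y)`; a potential that drops by at most one per step makes this precise.
Conversely, a depth-first tour of each of these subtrees from the root, toggling lamps on the way,
has length at most `d(x, y) (2^(n+1) + (n - m) 2^(n - m + 1)) + |S|`. The ratio of the two bounds
tends to `1` as `n - m → ∞`.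
-/

open Finset SimpleGraph

namespace SimpleGraph

variable {V : Type*} {G : SimpleGraph V}

theorem exists_closed_walk_forall_mem_support {ι : Type*} (r : V) (Δ : Finset ι) (P : ι → V → Prop)
    (L : ℕ) (h : ∀ i ∈ Δ, ∃ w : G.Walk r r, w.length ≤ L ∧ ∀ v, P i v → v ∈ w.support) :
    ∃ w : G.Walk r r, w.length ≤ #Δ * L ∧ ∀ i ∈ Δ, ∀ v, P i v → v ∈ w.support := by
  classical
  induction Δ using Finset.induction_on with
  | empty => exact ⟨.nil, by simp, by simp⟩
  | insert i Δ hi ih =>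
    obtain ⟨w₁, hw₁, hP₁⟩ := h i (mem_insert_self i Δ)
    obtain ⟨w₂, hw₂, hP₂⟩ := ih fun j hj => h j (mem_insert_of_mem hj)
    refine ⟨w₁.append w₂, ?_, ?_⟩
    · rw [Walk.length_append, card_insert_of_notMem hi]
      nlinarith
    · intro j hj v hv
      rw [Walk.mem_support_append_iff]
      rcases mem_insert.mp hj with rfl | hj
      exacts [Or.inl (hP₁ v hv), Or.inr (hP₂ j hj v hv)]

end SimpleGraph

theorem Finset.sum_le_sum_add_one_of_subsingleton {ι : Type*} {U : Finset ι} {f g : ι → ℕ}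
    {D : Set ι} (hD : D.Subsingleton) (hle : ∀ i ∈ U, f i ≤ g i + 1)
    (heq : ∀ i ∈ U, i ∉ D → f i = g i) : ∑ i ∈ U, f i ≤ ∑ i ∈ U, g i + 1 := by
  classical
  by_cases h : ∃ i ∈ U, i ∈ D
  · obtain ⟨i, hiU, hiD⟩ := h
    have hrest : ∀ j ∈ U.erase i, f j = g j := fun j hj =>
      heq j (mem_of_mem_erase hj) fun hjD => ne_of_mem_erase hj (hD hjD hiD)
    rw [← add_sum_erase U f hiU, ← add_sum_erase U g hiU, sum_congr rfl hrest]
    linarith [hle i hiU]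
  · push Not at h
    rw [sum_congr rfl fun i hi => heq i hi (h i hi)]
    exact Nat.le_succ _

theorem Finset.biUnion_symmDiff_biUnion {ι α : Type*} [DecidableEq ι] [DecidableEq α]
    {T : ι → Finset α} (hT : Pairwise fun i j => Disjoint (T i) (T j)) (s t : Finset ι) :
    s.biUnion T ∆ t.biUnion T = (s ∆ t).biUnion T := by
  have huniq : ∀ {i j v}, v ∈ T i → v ∈ T j → i = j := fun {i j _} hi hj => by
    by_contra hij
    exact disjoint_left.1 (hT hij) hi hj
  ext v
  simp only [mem_symmDiff, mem_biUnion]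
  constructor
  · rintro (⟨⟨i, hi, hv⟩, hnot⟩ | ⟨⟨i, hi, hv⟩, hnot⟩)
    exacts [⟨i, Or.inl ⟨hi, fun hi' => hnot ⟨i, hi', hv⟩⟩, hv⟩,
      ⟨i, Or.inr ⟨hi, fun hi' => hnot ⟨i, hi', hv⟩⟩, hv⟩]
  · rintro ⟨i, (⟨hi, hnot⟩ | ⟨hi, hnot⟩), hv⟩
    exacts [Or.inl ⟨⟨i, hi, hv⟩, fun ⟨j, hj, hvj⟩ => hnot (huniq hvj hv ▸ hj)⟩,
      Or.inr ⟨⟨i, hi, hv⟩, fun ⟨j, hj, hvj⟩ => hnot (huniq hvj hv ▸ hj)⟩]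

namespace Lam

variable {V : Type*} [DecidableEq V] {G : SimpleGraph V}

lemma adj_toggle (C : Finset V) (x : V) : (Lam G).Adj (C, x) (C ∆ {x}, x) :=
  Or.inr ⟨rfl, symmDiff_symmDiff_cancel_left C {x}⟩

lemma adj_move (C : Finset V) {x y : V} (h : G.Adj x y) : (Lam G).Adj (C, x) (C, y) :=
  Or.inl ⟨rfl, h⟩

theorem exists_walk_toggle {a b : V} (w : G.Walk a b) (C S : Finset V)
    (hS : ∀ v ∈ S, v ∈ w.support) :
    ∃ W : (Lam G).Walk (C, a) (C ∆ S, b), W.length = w.length + #S := by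
  induction w generalizing C S with
  | nil =>
    obtain rfl | rfl := subset_singleton_iff.mp fun v hv => by simpa using hS v hv
    · exact ⟨Walk.nil.copy rfl (by rw [← bot_eq_empty, symmDiff_bot]), by simp⟩
    · exact ⟨Walk.cons (adj_toggle C _) Walk.nil, by simp⟩
  | @cons x y z hxy w ih =>
    by_cases hx : x ∈ S
    · obtain ⟨W, hW⟩ := ih (C ∆ {x}) (S.erase x) fun v hv => by
        simpa [ne_of_mem_erase hv] using hS v (mem_of_mem_erase hv)
      have hC : C ∆ {x} ∆ S.erase x = C ∆ S := by
        rw [symmDiff_assoc, (disjoint_singleton_left.2 (notMem_erase x S)).symmDiff_eq_sup,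
          sup_eq_union, ← insert_eq, insert_erase hx]
      refine ⟨.cons (adj_toggle C x) (.cons (adj_move _ hxy) (W.copy rfl (by rw [hC]))), ?_⟩
      simp [hW, ← card_erase_add_one hx]
      omega
    · obtain ⟨W, hW⟩ := ih C S fun v hv => by
        simpa [show v ≠ x by rintro rfl; exact hx hv] using hS v hv
      exact ⟨.cons (adj_move C hxy) W, by simp [hW]; omega⟩

theorem dist_le_length_add_card {a b : V} (w : G.Walk a b) (C S : Finset V)
    (hS : ∀ v ∈ S, v ∈ w.support) :
    (Lam G).Reachable (C, a) (C ∆ S, b) ∧ (Lam G).dist (C, a) (C ∆ S, b) ≤ w.length + #S := by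
  obtain ⟨W, hW⟩ := exists_walk_toggle w C S hS
  exact ⟨⟨W⟩, hW ▸ dist_le W⟩

variable (R : V → V → Prop) [DecidableRel R]

/- Read `R v w` as "`w` lies in the subtree below the edge entering `v`". A walk in `Lam G` from
`s` to `(B, r)`, with `r` outside every subtree, must still cross the edge entering `v` at least
`crossings R B s v` times: twice if a lamp differing from `B` lies below `v` and the lamplighter
is outside, once if the lamplighter is inside. -/
def crossings (B : Finset V) (s : Finset V × V) (v : V) : ℕ :=
  if ∃ w ∈ s.1 ∆ B, R v w then (if R v s.2 then 1 else 2) else (if R v s.2 then 1 else 0)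

def potential (B U : Finset V) (s : Finset V × V) : ℕ :=
  #(s.1 ∆ B) + ∑ v ∈ U, crossings R B s v

variable {R} {B U : Finset V} {s t : Finset V × V}

lemma crossings_le_succ_of_fst_eq (h : s.1 = t.1) (v : V) :
    crossings R B s v ≤ crossings R B t v + 1 := by
  unfold crossings
  rw [h]
  split_ifs <;> omega

lemma crossings_eq_of_fst_eq (h : s.1 = t.1) {v : V} (hv : R v s.2 ↔ R v t.2) :
    crossings R B s v = crossings R B t v := by
  simp only [crossings, h, hv]

lemma mem_symmDiff_iff_of_symmDiff_eq_singleton {c w : V} (h : s.1 ∆ t.1 = {c}) (hw : w ≠ c) :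
    w ∈ s.1 ∆ B ↔ w ∈ t.1 ∆ B := by
  have : w ∉ s.1 ∆ t.1 := by rwa [h, mem_singleton]
  simp only [mem_symmDiff] at this ⊢
  tauto

lemma crossings_eq_of_toggle (hpos : s.2 = t.2) (hsym : s.1 ∆ t.1 = {s.2}) (v : V) :
    crossings R B s v = crossings R B t v := by
  by_cases hv : R v s.2
  · simp [crossings, ← hpos, hv]
  have hpending : (∃ w ∈ s.1 ∆ B, R v w) ↔ (∃ w ∈ t.1 ∆ B, R v w) := by
    refine exists_congr fun w => ⟨fun ⟨hw, hvw⟩ => ⟨?_, hvw⟩, fun ⟨hw, hvw⟩ => ⟨?_, hvw⟩⟩ <;>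
    · have hws : w ≠ s.2 := by rintro rfl; exact hv hvw
      first
      | exact (mem_symmDiff_iff_of_symmDiff_eq_singleton hsym hws).1 hw
      | exact (mem_symmDiff_iff_of_symmDiff_eq_singleton hsym hws).2 hw
  simp only [crossings, ← hpos, hpending]

theorem potential_le_of_adj (hcut : ∀ c c', G.Adj c c' → {v | ¬(R v c ↔ R v c')}.Subsingleton)
    (h : (Lam G).Adj s t) : potential R B U s ≤ potential R B U t + 1 := by
  unfold potential
  rcases h with ⟨hC, hG⟩ | ⟨hpos, hsym⟩
  · have := sum_le_sum_add_one_of_subsingleton (U := U) (hcut _ _ hG)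
      (fun v _ => crossings_le_succ_of_fst_eq (B := B) hC v)
      (fun v _ hv => crossings_eq_of_fst_eq hC (not_not.mp hv))
    rw [hC]
    omega
  · have hsub : s.1 ∆ B ⊆ insert s.2 (t.1 ∆ B) := fun w hw => by
      by_cases hws : w = s.2
      · exact hws ▸ mem_insert_self _ _
      · exact mem_insert_of_mem ((mem_symmDiff_iff_of_symmDiff_eq_singleton hsym hws).1 hw)
    have hcard := (card_le_card hsub).trans (card_insert_le _ _)
    rw [sum_congr rfl fun v _ => crossings_eq_of_toggle hpos hsym v]
    omega

theorem potential_le_length_add (hcut : ∀ c c', G.Adj c c' → {v | ¬(R v c ↔ R v c')}.Subsingleton)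
    (W : (Lam G).Walk s t) : potential R B U s ≤ W.length + potential R B U t := by
  induction W with
  | nil => simp
  | cons h _ ih =>
    have := potential_le_of_adj (B := B) (U := U) hcut h
    rw [Walk.length_cons]
    omega

/-- Each lamp to be toggled costs one toggle and two crossings of the edge entering it. -/
theorem three_mul_card_symmDiff_le_dist
    (hcut : ∀ c c', G.Adj c c' → {v | ¬(R v c ↔ R v c')}.Subsingleton)
    {C : Finset V} {r : V} (hrefl : ∀ v ∈ C ∆ B, R v v) (hr : ∀ v ∈ C ∆ B, ¬R v r)
    (hreach : (Lam G).Reachable (C, r) (B, r)) :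
    3 * #(C ∆ B) ≤ (Lam G).dist (C, r) (B, r) := by
  obtain ⟨W, hW⟩ := hreach.exists_walk_length_eq_dist
  have hstart : potential R B (C ∆ B) (C, r) = 3 * #(C ∆ B) := by
    rw [potential, sum_congr rfl fun v hv => show crossings R B (C, r) v = 2 by
      have hpending : ∃ w ∈ C ∆ B, R v w := ⟨v, hv, hrefl v hv⟩
      simp [crossings, hr v hv, hpending]]
    rw [sum_const, smul_eq_mul]
    ring
  have hend : potential R B (C ∆ B) (B, r) = 0 := by
    simp +contextual [potential, crossings, hr]
  have := potential_le_length_add (B := B) (U := C ∆ B) hcut W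
  omega

end Lam

lemma commonPrefix_prefix : ∀ a b : List Bool, commonPrefix a b <+: a ∧ commonPrefix a b <+: b
  | a :: as, b :: bs => by
    unfold commonPrefix
    split_ifs with h
    · subst h
      exact ⟨List.cons_prefix_cons.2 ⟨rfl, (commonPrefix_prefix as bs).1⟩,
        List.cons_prefix_cons.2 ⟨rfl, (commonPrefix_prefix as bs).2⟩⟩
    · simp
  | [], _ => by simp [commonPrefix]
  | _ :: _, [] => by simp [commonPrefix]

lemma wdepth_le_wdepth {θ n : ℕ} {a b : List Bool} (h : a.length ≤ b.length) :
    wdepth θ n a ≤ wdepth θ n b :=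
  sum_le_sum_of_subset (range_subset_range.2 h)

lemma wdepth_eq_wdepth_dropLast_add {θ n : ℕ} {l : List Bool} (h : l ≠ []) :
    wdepth θ n l = wdepth θ n l.dropLast + θ ^ (n - l.length) := by
  have hl : l.length - 1 + 1 = l.length := Nat.succ_pred_eq_of_pos (List.length_pos_iff.2 h)
  rw [wdepth, wdepth, List.length_dropLast, ← hl, sum_range_succ, hl]

lemma sum_range_two_pow_add_two_pow_eq {n k : ℕ} (hk : k ≤ n) :
    ∑ i ∈ range k, 2 ^ (n - (i + 1)) + 2 ^ (n - k) = 2 ^ n := by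
  induction k with
  | zero => simp
  | succ k ih =>
    rw [sum_range_succ, ← ih (by omega), show n - k = n - (k + 1) + 1 by omega, pow_succ]
    ring

namespace Wvertex

variable {θ n : ℕ}

def IsAncestor (v w : Wvertex θ n) : Prop :=
  v.1.1 <+: w.1.1 ∧ (v.1.1 = w.1.1 → v.1.2 ≤ w.1.2)

instance (v w : Wvertex θ n) : Decidable (v.IsAncestor w) := by
  unfold IsAncestor; infer_instance

lemma IsAncestor.refl (v : Wvertex θ n) : v.IsAncestor v := ⟨List.prefix_refl _, fun _ => le_rfl⟩

lemma IsAncestor.trans {u v w : Wvertex θ n} (huv : u.IsAncestor v) (hvw : v.IsAncestor w) :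
    u.IsAncestor w := by
  refine ⟨huv.1.trans hvw.1, fun h => ?_⟩
  have : u.1.1 = v.1.1 := huv.1.eq_of_length_le (h ▸ hvw.1.length_le)
  exact (huv.2 this).trans (hvw.2 (this.symm.trans h))

lemma isAncestor_or_isAncestor_of_prefix {v w : Wvertex θ n} (h : v.1.1 <+: w.1.1) :
    v.IsAncestor w ∨ w.IsAncestor v := by
  by_cases he : v.1.1 = w.1.1
  · rcases le_total v.1.2 w.1.2 with hr | hr
    exacts [Or.inl ⟨h, fun _ => hr⟩, Or.inr ⟨he ▸ List.prefix_refl _, fun _ => hr⟩]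
  · exact Or.inl ⟨h, fun h' => absurd h' he⟩

lemma IsAncestor.total {u v w : Wvertex θ n} (hu : u.IsAncestor w) (hv : v.IsAncestor w) :
    u.IsAncestor v ∨ v.IsAncestor u := by
  rcases List.prefix_or_prefix_of_prefix hu.1 hv.1 with h | h
  · exact isAncestor_or_isAncestor_of_prefix h
  · exact (isAncestor_or_isAncestor_of_prefix h).symm

lemma snd_eq_zero {v : Wvertex θ n} (h : v.1.1 = []) : v.1.2 = 0 := v.2.2.2.1 h

lemma one_le_snd {v : Wvertex θ n} (h : v.1.1 ≠ []) : 1 ≤ v.1.2 := (v.2.2.2.2 h).1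

lemma snd_le (v : Wvertex θ n) : v.1.2 ≤ θ ^ (n - v.1.1.length) := by
  by_cases h : v.1.1 = []
  · simp [snd_eq_zero h]
  · exact (v.2.2.2.2 h).2

lemma wheight_le_wdepth (v : Wvertex θ n) : wheight θ n v ≤ wdepth θ n v.1.1 := by
  by_cases h : v.1.1 = []
  · simp [wheight, h, snd_eq_zero h]
  · rw [wheight, wdepth_eq_wdepth_dropLast_add h]
    exact Nat.add_le_add_left (snd_le v) _

lemma wdepth_lt_wheight {q : List Bool} {v : Wvertex θ n} (hq : q <+: v.1.1) (hne : q ≠ v.1.1) :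
    wdepth θ n q < wheight θ n v := by
  have hv : v.1.1 ≠ [] := by rintro h; exact hne (List.prefix_nil.1 (h ▸ hq) ▸ h.symm)
  have hlen : q.length < v.1.1.length :=
    lt_of_le_of_ne hq.length_le fun h => hne (hq.eq_of_length h)
  have : wdepth θ n q ≤ wdepth θ n v.1.1.dropLast :=
    wdepth_le_wdepth (by rw [List.length_dropLast]; omega)
  have := one_le_snd hv
  unfold wheight
  omega

lemma wheight_lt_of_isAncestor {v w : Wvertex θ n} (h : v.IsAncestor w) (hne : v ≠ w) :
    wheight θ n v < wheight θ n w := by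
  by_cases he : v.1.1 = w.1.1
  · have : v.1.2 ≠ w.1.2 := fun h' => hne (Subtype.ext (Prod.ext he h'))
    have := h.2 he
    unfold wheight
    rw [he]
    omega
  · exact (wheight_le_wdepth v).trans_lt (wdepth_lt_wheight h.1 he)

lemma wheight_le_of_isAncestor {v w : Wvertex θ n} (h : v.IsAncestor w) :
    wheight θ n v ≤ wheight θ n w := by
  rcases eq_or_ne v w with rfl | hne
  exacts [le_rfl, (wheight_lt_of_isAncestor h hne).le]

lemma adj_cases {c c' : Wvertex θ n} (h : (WGraph θ n).Adj c c') :
    (c.IsAncestor c' ∧ wheight θ n c' = wheight θ n c + 1) ∨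
      (c'.IsAncestor c ∧ wheight θ n c = wheight θ n c' + 1) := by
  obtain ⟨-, hd, -⟩ := h
  unfold Wdist at hd
  split_ifs at hd with hpre
  · have hanc : c.IsAncestor c' ∨ c'.IsAncestor c := by
      simp only [List.isPrefixOf_iff_prefix] at hpre
      exact hpre.elim isAncestor_or_isAncestor_of_prefix fun hp =>
        (isAncestor_or_isAncestor_of_prefix hp).symm
    rcases hanc with ha | ha
    · exact Or.inl ⟨ha, by have := wheight_le_of_isAncestor ha; omega⟩
    · exact Or.inr ⟨ha, by have := wheight_le_of_isAncestor ha; omega⟩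
  · simp only [List.isPrefixOf_iff_prefix, not_or] at hpre
    obtain ⟨hq, hq'⟩ := commonPrefix_prefix c.1.1 c'.1.1
    have := wdepth_lt_wheight (θ := θ) (n := n) hq fun h => hpre.1 (h ▸ hq')
    have := wdepth_lt_wheight (θ := θ) (n := n) hq' fun h => hpre.2 (h ▸ hq)
    omega

lemma isAncestor_of_isAncestor_of_wheight_eq_succ {x p v : Wvertex θ n} (hx : x.IsAncestor v)
    (hp : p.IsAncestor v) (hh : wheight θ n v = wheight θ n p + 1) (hne : x ≠ v) :
    x.IsAncestor p := by
  rcases hx.total hp with hxp | hpx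
  · exact hxp
  rcases eq_or_ne p x with rfl | hpx'
  · exact IsAncestor.refl p
  have := wheight_lt_of_isAncestor hx hne
  have := wheight_lt_of_isAncestor hpx hpx'
  omega

theorem subsingleton_cut {c c' : Wvertex θ n} (h : (WGraph θ n).Adj c c') :
    {v : Wvertex θ n | ¬(v.IsAncestor c ↔ v.IsAncestor c')}.Subsingleton := by
  suffices key : ∀ {a a' : Wvertex θ n}, a.IsAncestor a' →
      wheight θ n a' = wheight θ n a + 1 → ∀ u, ¬(u.IsAncestor a ↔ u.IsAncestor a') → u = a' by
    rcases adj_cases h with ⟨ha, hh⟩ | ⟨ha, hh⟩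
    · exact fun u hu w hw => (key ha hh u hu).trans (key ha hh w hw).symm
    · exact fun u hu w hw =>
        (key ha hh u (mt Iff.symm hu)).trans (key ha hh w (mt Iff.symm hw)).symm
  intro a a' ha hh u hu
  by_contra hne
  exact hu ⟨fun hua => hua.trans ha,
    fun hua' => isAncestor_of_isAncestor_of_wheight_eq_succ hua' ha hh hne⟩

lemma IsAncestor.antisymm {u v : Wvertex θ n} (huv : u.IsAncestor v) (hvu : v.IsAncestor u) :
    u = v := by
  by_contra hne
  exact (wheight_lt_of_isAncestor huv hne).not_ge (wheight_le_of_isAncestor hvu)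

lemma adj_of_isAncestor {u v : Wvertex θ n} (h : u.IsAncestor v)
    (hh : wheight θ n v = wheight θ n u + 1) : (WGraph θ n).Adj u v := by
  have hpre : u.1.1.isPrefixOf v.1.1 ∨ v.1.1.isPrefixOf u.1.1 :=
    Or.inl (List.isPrefixOf_iff_prefix.2 h.1)
  refine ⟨fun he => by simp [he] at hh, ?_, ?_⟩
  · simp only [Wdist, if_pos hpre]
    omega
  · simp only [Wdist, if_pos hpre.symm]
    omega

lemma eq_root_of_fst_eq_nil {v : Wvertex θ n} (h : v.1.1 = []) : v = Wroot θ n :=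
  Subtype.ext (Prod.ext h (snd_eq_zero h))

lemma isAncestor_root (v : Wvertex θ n) : (Wroot θ n).IsAncestor v :=
  ⟨List.nil_prefix, fun _ => Nat.zero_le _⟩

end Wvertex

namespace Wvertex

variable {n : ℕ}

def node (p : List Bool) (hp : p.length ≤ n) : Wvertex 2 n :=
  ⟨(p, if p = [] then 0 else 2 ^ (n - p.length)), hp, by split_ifs <;> simp [Nat.pow_le_pow_right],
    by simp +contextual, fun h => by simp [h, Nat.one_le_two_pow]⟩

lemma wheight_node (p : List Bool) (hp : p.length ≤ n) :
    wheight 2 n (node p hp) = wdepth 2 n p := by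
  by_cases h : p = []
  · simp [node, wheight, wdepth, h]
  · simp [node, wheight, h, wdepth_eq_wdepth_dropLast_add h]

lemma isAncestor_node {v : Wvertex 2 n} {p : List Bool} (hp : p.length ≤ n) (h : v.1.1 = p) :
    v.IsAncestor (node p hp) := by
  refine ⟨h ▸ List.prefix_refl _, fun _ => ?_⟩
  by_cases hp0 : p = []
  · simp [node, hp0, snd_eq_zero (h.trans hp0)]
  · simpa [node, hp0, h] using snd_le v

lemma node_isAncestor {v : Wvertex 2 n} {p : List Bool} (hp : p.length ≤ n) (h : p <+: v.1.1)
    (hne : p ≠ v.1.1) : (node p hp).IsAncestor v :=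
  ⟨h, fun h' => absurd h' hne⟩

lemma exists_parent {v : Wvertex 2 n} (hv : v.1.1 ≠ []) :
    ∃ u : Wvertex 2 n, u.IsAncestor v ∧ wheight 2 n v = wheight 2 n u + 1 := by
  obtain ⟨hr1, hr2⟩ := v.2.2.2.2 hv
  have hlen : v.1.1.length ≤ n := v.2.1
  by_cases h1 : v.1.2 = 1
  · have hlen' : v.1.1.dropLast.length ≤ n := by simp; omega
    refine ⟨node v.1.1.dropLast hlen', ⟨v.1.1.dropLast_prefix, fun h => ?_⟩, ?_⟩
    · have : v.1.1.dropLast.length = v.1.1.length := congrArg List.length h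
      rw [List.length_dropLast] at this
      have := List.length_pos_iff.2 hv
      omega
    · rw [wheight_node, wheight, h1]
  · refine ⟨⟨(v.1.1, v.1.2 - 1), hlen, by have := v.2.2.1; omega, fun h => absurd h hv,
      fun _ => ⟨by omega, (Nat.sub_le _ _).trans hr2⟩⟩,
      ⟨List.prefix_refl _, fun _ => Nat.sub_le _ _⟩, ?_⟩
    simp only [wheight]
    omega

theorem exists_walk_of_isAncestor {u v : Wvertex 2 n} (h : u.IsAncestor v) :
    ∃ w : (WGraph 2 n).Walk u v, w.length = wheight 2 n v - wheight 2 n u ∧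
      ∀ x : Wvertex 2 n, u.IsAncestor x → x.IsAncestor v → x ∈ w.support := by
  induction hk : wheight 2 n v generalizing v with
  | zero =>
    obtain rfl : u = v := by
      by_contra hne
      have := wheight_lt_of_isAncestor h hne
      omega
    exact ⟨.nil, by simp, fun x h1 h2 => by simp [h1.antisymm h2]⟩
  | succ k ih =>
    rcases eq_or_ne u v with rfl | hne
    · exact ⟨.nil, by rw [Walk.length_nil]; omega, fun x h1 h2 => by simp [h1.antisymm h2]⟩
    have hv : v.1.1 ≠ [] := fun hv => hne <|
      (eq_root_of_fst_eq_nil (List.prefix_nil.1 (hv ▸ h.1))).trans (eq_root_of_fst_eq_nil hv).symm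
    obtain ⟨p, hp, hh⟩ := exists_parent hv
    have hup := isAncestor_of_isAncestor_of_wheight_eq_succ h hp hh hne
    obtain ⟨w, hw, hsupp⟩ := ih hup (by omega)
    refine ⟨w.concat (adj_of_isAncestor hp hh), ?_, fun x hux hxv => ?_⟩
    · have := wheight_le_of_isAncestor hup
      rw [Walk.length_concat]
      omega
    · simp only [Walk.support_concat, List.mem_append, List.mem_singleton]
      rcases eq_or_ne x v with rfl | hxv'
      · exact Or.inr rfl
      · exact Or.inl (hsupp x hux (isAncestor_of_isAncestor_of_wheight_eq_succ hxv hp hh hxv'))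

lemma wheight_node_append (p : List Bool) (b : Bool) (hp : (p ++ [b]).length ≤ n) :
    wheight 2 n (node (p ++ [b]) hp) =
      wheight 2 n (node p (by simp at hp; omega)) + 2 ^ (n - (p.length + 1)) := by
  rw [wheight_node, wheight_node, wdepth_eq_wdepth_dropLast_add (by simp)]
  simp

theorem exists_closed_walk_below (j : ℕ) (p : List Bool) (hp : p.length + j = n) :
    ∃ w : (WGraph 2 n).Walk (node p (by omega)) (node p (by omega)),
      w.length = j * 2 ^ (j + 1) ∧ ∀ v : Wvertex 2 n, p <+: v.1.1 → v.1.1 ≠ p → v ∈ w.support := by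
  induction j generalizing p with
  | zero =>
    refine ⟨.nil, by simp, fun v hpv hne => absurd (hpv.eq_of_length ?_).symm hne⟩
    have := hpv.length_le
    have := v.2.1
    omega
  | succ j ih =>
    have loop : ∀ b : Bool, ∃ w : (WGraph 2 n).Walk (node p (by omega)) (node p (by omega)),
        w.length = 2 ^ j + (j * 2 ^ (j + 1) + 2 ^ j) ∧
          ∀ v : Wvertex 2 n, p ++ [b] <+: v.1.1 → v ∈ w.support := by
      intro b
      have hpb : (p ++ [b]).length ≤ n := by simp; omega
      obtain ⟨e, he, hesupp⟩ := exists_walk_of_isAncestor <|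
        node_isAncestor (v := node (p ++ [b]) hpb) (by omega) (List.prefix_append _ _)
          (by simp [node])
      obtain ⟨w, hw, hwsupp⟩ := ih (p ++ [b]) (by simp; omega)
      refine ⟨e.append (w.append e.reverse), ?_, fun v hv => ?_⟩
      · rw [Walk.length_append, Walk.length_append, Walk.length_reverse, he, hw,
          wheight_node_append]
        rw [add_tsub_cancel_left, show n - (p.length + 1) = j by omega]
      · simp only [Walk.mem_support_append_iff]
        by_cases hvb : v.1.1 = p ++ [b]
        · refine Or.inl (hesupp v (node_isAncestor _ (hvb ▸ List.prefix_append _ _) ?_)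
            (isAncestor_node hpb hvb))
          rw [hvb]
          simp
        · exact Or.inr (Or.inl (hwsupp v hv hvb))
    obtain ⟨w₁, hw₁, hsupp₁⟩ := loop true
    obtain ⟨w₀, hw₀, hsupp₀⟩ := loop false
    refine ⟨w₁.append w₀, ?_, fun v hpv hne => ?_⟩
    · rw [Walk.length_append, hw₁, hw₀, pow_succ, pow_succ, pow_succ]
      ring
    · obtain ⟨_ | ⟨b, t⟩, ht⟩ := hpv
      · exact absurd (by simpa using ht.symm) hne
      · have hbv : p ++ [b] <+: v.1.1 := ⟨t, by rw [← ht]; simp⟩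
        rw [Walk.mem_support_append_iff]
        cases b
        exacts [Or.inr (hsupp₀ v hbv), Or.inl (hsupp₁ v hbv)]

theorem exists_closed_walk_root {a : List Bool} (ha : a.length ≤ n) :
    ∃ w : (WGraph 2 n).Walk (Wroot 2 n) (Wroot 2 n),
      w.length ≤ 2 * 2 ^ n + (n - a.length) * 2 ^ (n - a.length + 1) ∧
        ∀ v : Wvertex 2 n, a <+: v.1.1 → v ∈ w.support := by
  obtain ⟨e, he, hesupp⟩ := exists_walk_of_isAncestor (isAncestor_root (node a ha))
  obtain ⟨w, hw, hwsupp⟩ := exists_closed_walk_below (n := n) (n - a.length) a (by omega)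
  refine ⟨e.append (w.append e.reverse), ?_, fun v hv => ?_⟩
  · have hdepth : wdepth 2 n a ≤ 2 ^ n :=
      (Nat.le_add_right _ (2 ^ (n - a.length))).trans (sum_range_two_pow_add_two_pow_eq ha).le
    have hroot : wheight 2 n (Wroot 2 n) = 0 := by simp [wheight, wdepth, Wroot]
    rw [Walk.length_append, Walk.length_append, Walk.length_reverse, he, hw, wheight_node, hroot]
    omega
  · simp only [Walk.mem_support_append_iff]
    by_cases hva : v.1.1 = a
    · exact Or.inl (hesupp v (isAncestor_root v) (isAncestor_node ha hva))
    · exact Or.inr (Or.inl (hwsupp v hv hva))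

end Wvertex

section CubeEmbedding

/-- The vertices of `W_{2,n}` whose address extends `a`, listed by the extension `t` (of length
`j ≤ n - |a|`) and the position `r` on the edge entering `a ++ t`. -/
def subtree (n : ℕ) (a : List Bool) : Finset (Wvertex 2 n) :=
  ((range (n - a.length + 1)).biUnion fun j =>
    ((univ : Finset (List.Vector Bool j)) ×ˢ Icc 1 (2 ^ (n - a.length - j))).image
      fun q => (a ++ q.1.toList, q.2)).subtype (WCond 2 n)

variable {n : ℕ}

lemma prefix_of_mem_subtree {a : List Bool} {v : Wvertex 2 n} (hv : v ∈ subtree n a) :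
    a <+: v.1.1 := by
  replace hv : v.1 ∈ _ := mem_subtype.1 hv
  simp only [mem_biUnion, mem_image] at hv
  obtain ⟨j, -, q, -, hq⟩ := hv
  exact ⟨q.1.toList, congrArg Prod.fst hq⟩

lemma card_subtree {a : List Bool} (ha : a ≠ []) (hn : a.length ≤ n) :
    #(subtree n a) = (n - a.length + 1) * 2 ^ (n - a.length) := by
  set N := n - a.length
  set piece : ℕ → Finset (List Bool × ℕ) := fun j =>
    ((univ : Finset (List.Vector Bool j)) ×ˢ Icc 1 (2 ^ (N - j))).image
      fun q => (a ++ q.1.toList, q.2) with hpiece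
  have hlen : ∀ j, ∀ q ∈ piece j, q.1.length = a.length + j := by
    intro j q hq
    obtain ⟨⟨t, r⟩, -, rfl⟩ := mem_image.1 hq
    simp
  have hcard : ∀ j ∈ range (N + 1), #(piece j) = 2 ^ N := by
    intro j hj
    have hinj : Function.Injective fun q : List.Vector Bool j × ℕ => (a ++ q.1.toList, q.2) :=
      fun x y h => by
        obtain ⟨h1, h2⟩ := Prod.mk.inj h
        exact Prod.ext (List.Vector.toList_injective (List.append_cancel_left h1)) h2
    rw [card_image_of_injective _ hinj, card_product, card_univ, card_vector, Fintype.card_bool,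
      Nat.card_Icc, Nat.add_sub_cancel, ← pow_add, Nat.add_sub_cancel' (by simpa using hj)]
  have hcond : ∀ q ∈ (range (N + 1)).biUnion piece, WCond 2 n q := by
    simp only [mem_biUnion, mem_range, hpiece, mem_image, mem_product, mem_univ, true_and,
      mem_Icc]
    rintro _ ⟨j, hj, ⟨t, r⟩, ⟨hr1, hr2⟩, rfl⟩
    have hr : r ≤ 2 ^ (n - (a ++ t.toList).length) := by simpa [N, Nat.sub_sub] using hr2
    exact ⟨by simp; omega, hr.trans (Nat.pow_le_pow_right two_pos (Nat.sub_le _ _)),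
      fun h => absurd (List.append_eq_nil_iff.1 h).1 ha, fun _ => ⟨hr1, hr⟩⟩
  have hdisj : (range (N + 1) : Set ℕ).PairwiseDisjoint piece := fun i _ j _ hij =>
    disjoint_left.2 fun q hi hj => hij (by have := hlen i q hi; have := hlen j q hj; omega)
  refine (card_subtype (WCond 2 n) _).trans ?_
  rw [filter_true_of_mem hcond, card_biUnion hdisj, sum_congr rfl hcard,
    sum_const, card_range, smul_eq_mul]

lemma disjoint_subtree {a b : List Bool} (hlen : a.length = b.length) (hne : a ≠ b) :
    Disjoint (subtree n a) (subtree n b) :=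
  disjoint_left.2 fun _ ha hb => hne <|
    (List.prefix_or_prefix_of_prefix (prefix_of_mem_subtree ha) (prefix_of_mem_subtree hb)).elim
      (fun h => h.eq_of_length hlen) fun h => (h.eq_of_length hlen.symm).symm

/-- Any `m` distinct nodes of a common depth would serve; the paper uses depth `⌈log₂ m⌉`. -/
def coordAddress {m : ℕ} (i : Fin m) : List Bool := List.ofFn fun j => decide (i = j)

lemma length_coordAddress {m : ℕ} (i : Fin m) : (coordAddress i).length = m := by
  simp [coordAddress]

lemma coordAddress_ne_nil {m : ℕ} (i : Fin m) : coordAddress i ≠ [] := by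
  simpa [← List.length_pos_iff, length_coordAddress] using i.pos

lemma coordAddress_injective (m : ℕ) : Function.Injective (coordAddress (m := m)) :=
  fun i j h => (by simpa using congrFun (List.ofFn_injective h) i : j = i).symm

lemma pairwise_disjoint_subtree_coordAddress {m : ℕ} :
    Pairwise fun i j : Fin m =>
      Disjoint (subtree n (coordAddress i)) (subtree n (coordAddress j)) := fun _ _ hij =>
  disjoint_subtree (by simp [length_coordAddress]) ((coordAddress_injective m).ne hij)

def cubeLamps (n : ℕ) {m : ℕ} (x : Fin m → Bool) : Finset (Wvertex 2 n) :=
  (univ.filter (x · = true)).biUnion fun i => subtree n (coordAddress i)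

lemma cubeLamps_symmDiff {m : ℕ} (x y : Fin m → Bool) :
    cubeLamps n x ∆ cubeLamps n y =
      (univ.filter fun i => x i ≠ y i).biUnion fun i => subtree n (coordAddress i) := by
  have hfilter : univ.filter (x · = true) ∆ univ.filter (y · = true) =
      univ.filter fun i => x i ≠ y i := by
    ext i
    cases hx : x i <;> cases hy : y i <;> simp [mem_symmDiff, hx, hy]
  rw [cubeLamps, cubeLamps, biUnion_symmDiff_biUnion pairwise_disjoint_subtree_coordAddress,
    hfilter]

lemma card_cubeLamps_symmDiff {m : ℕ} (hm : m ≤ n) (x y : Fin m → Bool) :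
    #(cubeLamps n x ∆ cubeLamps n y) = (n - m + 1) * 2 ^ (n - m) * hamCubeDist x y := by
  rw [cubeLamps_symmDiff,
    card_biUnion fun i _ j _ hij => pairwise_disjoint_subtree_coordAddress hij,
    sum_congr rfl fun i _ => (card_subtree (coordAddress_ne_nil i)
      ((length_coordAddress i).trans_le hm)).trans (by rw [length_coordAddress]),
    sum_const, smul_eq_mul, hamCubeDist, mul_comm]

lemma exists_closed_walk_cubeLamps_symmDiff {m : ℕ} (hm : m ≤ n) (x y : Fin m → Bool) :
    ∃ w : (WGraph 2 n).Walk (Wroot 2 n) (Wroot 2 n),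
      w.length ≤ hamCubeDist x y * (2 * 2 ^ n + (n - m) * 2 ^ (n - m + 1)) ∧
        ∀ v ∈ cubeLamps n x ∆ cubeLamps n y, v ∈ w.support := by
  obtain ⟨w, hw, hsupp⟩ := exists_closed_walk_forall_mem_support (Wroot 2 n)
    (univ.filter fun i => x i ≠ y i) (fun i (v : Wvertex 2 n) => coordAddress i <+: v.1.1) _
    fun i _ => by
      simpa [length_coordAddress] using
        Wvertex.exists_closed_walk_root ((length_coordAddress i).trans_le hm)
  refine ⟨w, hw, fun v hv => ?_⟩
  rw [cubeLamps_symmDiff, mem_biUnion] at hv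
  obtain ⟨i, hi, hvi⟩ := hv
  exact hsupp i hi v (prefix_of_mem_subtree hvi)

def cubeEmbedding (n : ℕ) {m : ℕ} (x : Fin m → Bool) : Finset (Wvertex 2 n) × Wvertex 2 n :=
  (cubeLamps n x, Wroot 2 n)

theorem dist_cubeEmbedding_bounds {m : ℕ} (hm : m ≤ n) (x y : Fin m → Bool) :
    3 * ((n - m + 1) * 2 ^ (n - m)) * hamCubeDist x y ≤
        (Lam (WGraph 2 n)).dist (cubeEmbedding n x) (cubeEmbedding n y) ∧
      (Lam (WGraph 2 n)).dist (cubeEmbedding n x) (cubeEmbedding n y) ≤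
        (2 * 2 ^ n + (n - m) * 2 ^ (n - m + 1) + (n - m + 1) * 2 ^ (n - m)) * hamCubeDist x y := by
  obtain ⟨w, hw, hsupp⟩ := exists_closed_walk_cubeLamps_symmDiff hm x y
  obtain ⟨hreach, hdist⟩ := Lam.dist_le_length_add_card w _ _ hsupp
  rw [symmDiff_symmDiff_cancel_left] at hdist hreach
  rw [card_cubeLamps_symmDiff hm] at hdist
  refine ⟨?_, hdist.trans (by linarith)⟩
  rw [mul_assoc, ← card_cubeLamps_symmDiff hm]
  refine Lam.three_mul_card_symmDiff_le_dist (fun _ _ h => Wvertex.subsingleton_cut h)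
    (fun v _ => .refl v) (fun v hv hroot => ?_) hreach
  rw [cubeLamps_symmDiff, mem_biUnion] at hv
  obtain ⟨i, -, hvi⟩ := hv
  exact coordAddress_ne_nil i (List.prefix_nil.1 ((prefix_of_mem_subtree hvi).trans hroot.1))

lemma distortion_bound {ε : ℝ} (hε : 0 < ε) {m N : ℕ} (hN : (2 : ℝ) ^ (m + 1) ≤ 3 * ε * N) :
    (2 * 2 ^ (m + N) + N * 2 ^ (N + 1) + (N + 1) * 2 ^ N : ℝ) ≤
      (1 + ε) * (3 * ((N + 1) * 2 ^ N)) := by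
  have key : (2 ^ (m + 1) + 3 * N + 1 : ℝ) ≤ (1 + ε) * (3 * (N + 1)) := by nlinarith
  calc (2 * 2 ^ (m + N) + N * 2 ^ (N + 1) + (N + 1) * 2 ^ N : ℝ)
      = 2 ^ N * (2 ^ (m + 1) + 3 * N + 1) := by ring
    _ ≤ 2 ^ N * ((1 + ε) * (3 * (N + 1))) := by gcongr
    _ = (1 + ε) * (3 * ((N + 1) * 2 ^ N)) := by ring

end CubeEmbedding

/-- for every `ε > 0`, the sequence of Hamming cubes `(H_m)` embeds into the
sequence of lamplighter graphs `(Lam(W_{2,n}))` with distortion at most `1 + ε`: for each `m`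
there are `n` and a map `f : H_m → Lam(W_{2,n})` with distortion at most `1 + ε`. -/
theorem Hamming_cubes_into_lamplighters (ε : ℝ) (hε : 0 < ε) (m : ℕ) :
    ∃ (n : ℕ) (f : (Fin m → Bool) → Finset (Wvertex 2 n) × Wvertex 2 n) (lam : ℝ),
      0 < lam ∧ ∀ x y : Fin m → Bool,
        lam * hamCubeDist x y ≤ ((Lam (WGraph 2 n)).dist (f x) (f y) : ℝ) ∧
          ((Lam (WGraph 2 n)).dist (f x) (f y) : ℝ) ≤ (1 + ε) * lam * hamCubeDist x y := by
  obtain ⟨N, hN⟩ := exists_nat_ge ((2 : ℝ) ^ (m + 1) / (3 * ε))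
  have hN' : (2 : ℝ) ^ (m + 1) ≤ 3 * ε * N := by
    rwa [div_le_iff₀ (by positivity), mul_comm] at hN
  refine ⟨m + N, cubeEmbedding (m + N), 3 * ((N + 1) * 2 ^ N), by positivity, fun x y => ?_⟩
  obtain ⟨hlow, hup⟩ := dist_cubeEmbedding_bounds (Nat.le_add_right m N) x y
  rw [Nat.add_sub_cancel_left] at hlow hup
  constructor
  · exact_mod_cast hlow
  · calc ((Lam (WGraph 2 (m + N))).dist _ _ : ℝ)
        ≤ (2 * 2 ^ (m + N) + N * 2 ^ (N + 1) + (N + 1) * 2 ^ N) * hamCubeDist x y := by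
          exact_mod_cast hup
      _ ≤ (1 + ε) * (3 * ((N + 1) * 2 ^ N)) * hamCubeDist x y := by
          gcongr
          exact distortion_bound hε hN'
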